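/- Let n ∈ ℕ and let ρ : ℝⁿ \ {0} → [0,∞) satisfy (H0) and have compact support. Then Q_ρ ∈ L¹(ℝⁿ). -/

import Mathlib

open MeasureTheory Metric

noncomputable section

/-- `n`-dimensional Euclidean space. -/
abbrev Euc (n : ℕ) := EuclideanSpace ℝ (Fin n)

/-- Hypothesis (H0) on the kernel `ρ`. -/
def H0 (n : ℕ) (ρ : Euc n → ℝ) (ρb : ℝ → ℝ) (ε : ℝ) : Prop :=
  (∀ x, ρ x = ρb ‖x‖) ∧
  (∀ x : Euc n, x ≠ 0 → 0 ≤ ρ x) ∧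
  LocallyIntegrable ρ volume ∧
  Integrable (fun x : Euc n => min 1 ‖x‖⁻¹ * ρ x) volume ∧
  ∃ c > (0 : ℝ), ∀ x ∈ closedBall (0 : Euc n) ε, x ≠ 0 → c ≤ ρ x

/-- The potential `Q_ρ(x) = ∫_{|x|}^∞ ρ̄(t)/t dt`. -/
def Qrho (n : ℕ) (ρb : ℝ → ℝ) (x : Euc n) : ℝ :=
  ∫ t in Set.Ioi ‖x‖, ρb t / t

/-! By Tonelli, `∫ |Q_ρ| ≤ ∫_0^∞ |B_t| |ρ̄(t)| / t dt = |B_1| ∫_0^∞ t^(n-1) |ρ̄(t)| dt`, and the last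
integral is `‖ρ‖_{L¹}` up to the area of the unit sphere (polar coordinates). A compactly supported
locally integrable `ρ` is integrable. -/

open Set Module

section
variable {E : Type*} [NormedAddCommGroup E] [NormedSpace ℝ E] [FiniteDimensional ℝ E]
  [MeasurableSpace E] [BorelSpace E] [Nontrivial E] (μ : Measure E) [μ.IsAddHaarMeasure]

lemma measureReal_ball_div_eq {t : ℝ} (ht : 0 < t) :
    μ.real (ball 0 t) / t = μ.real (ball 0 1) * t ^ (finrank ℝ E - 1) := by
  have hpow : t ^ finrank ℝ E = t ^ (finrank ℝ E - 1) * t :=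
    (pow_sub_one_mul finrank_pos.ne' t).symm
  rw [measureReal_def, Measure.addHaar_ball _ _ ht.le, ENNReal.toReal_mul,
    ENNReal.toReal_ofReal (by positivity), hpow, ← measureReal_def]
  field_simp

lemma integrable_indicator_norm_lt_div {g : ℝ → ℝ}
    (hg : IntegrableOn (fun t => t ^ (finrank ℝ E - 1) * g t) (Ioi 0)) :
    Integrable ({p : E × ℝ | ‖p.1‖ < p.2}.indicator fun p => g p.2 / p.2)
      (μ.prod (volume.restrict (Ioi 0))) := by
  have hmeas : AEMeasurable (fun t => g t / t) (volume.restrict (Ioi 0)) := by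
    refine (hg.aemeasurable.div (measurable_id.pow_const (finrank ℝ E)).aemeasurable).congr ?_
    filter_upwards [ae_restrict_mem measurableSet_Ioi] with t (ht : 0 < t)
    have hpow : t ^ finrank ℝ E = t ^ (finrank ℝ E - 1) * t :=
      (pow_sub_one_mul finrank_pos.ne' t).symm
    simp only [Pi.div_apply, id, hpow]
    field_simp
  have hslice (x : E) (t : ℝ) : {p : E × ℝ | ‖p.1‖ < p.2}.indicator (fun p => g p.2 / p.2) (x, t)
      = (ball 0 t).indicator (fun _ => g t / t) x := by
    simp only [indicator, mem_ofPred_eq, mem_ball_zero_iff]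
  refine (integrable_prod_iff' ?_).2 ⟨.of_forall fun t => ?_, ?_⟩
  · exact (hmeas.comp_snd.indicator
      (measurableSet_lt measurable_fst.norm measurable_snd)).aestronglyMeasurable
  · simp only [hslice]
    exact (integrable_indicator_iff measurableSet_ball).2 (integrableOn_const measure_ball_lt_top.ne)
  · simp only [hslice, norm_indicator_eq_indicator_norm,
      integral_indicator_const _ measurableSet_ball]
    refine (hg.norm.const_mul (μ.real (ball 0 1))).congr ?_
    filter_upwards [ae_restrict_mem measurableSet_Ioi] with t (ht : 0 < t)
    rw [smul_eq_mul, norm_div, Real.norm_of_nonneg ht.le, norm_mul,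
      Real.norm_of_nonneg (by positivity), ← mul_div_assoc, mul_div_right_comm,
      measureReal_ball_div_eq μ ht, mul_assoc]

theorem integrable_setIntegral_Ioi_norm_div {g : ℝ → ℝ}
    (hg : IntegrableOn (fun t => t ^ (finrank ℝ E - 1) * g t) (Ioi 0)) :
    Integrable (fun x : E => ∫ t in Ioi ‖x‖, g t / t) μ := by
  refine (integrable_indicator_norm_lt_div μ hg).integral_prod_left.congr (.of_forall fun x => ?_)
  have hsection (t : ℝ) : {p : E × ℝ | ‖p.1‖ < p.2}.indicator (fun p => g p.2 / p.2) (x, t)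
      = (Ioi ‖x‖).indicator (fun t => g t / t) t := by
    simp only [indicator, mem_ofPred_eq, mem_Ioi]
  simp only [hsection, setIntegral_indicator measurableSet_Ioi,
    inter_eq_right.2 (Ioi_subset_Ioi (norm_nonneg x))]
end

theorem Qrho_integrable_general
    (n : ℕ) (ρ : Euc n → ℝ) (ρb : ℝ → ℝ) (ε : ℝ)
    (hρ : H0 n ρ ρb ε) (hsupp : HasCompactSupport ρ) :
    Integrable (Qrho n ρb) volume := by
  obtain ⟨hrad, -, hloc, -⟩ := hρ
  rcases subsingleton_or_nontrivial (Euc n) with _ | _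
  · exact .of_subsingleton
  have hρb : Integrable (fun x : Euc n => ρb ‖x‖) := by
    rw [← funext hrad]
    exact (hloc.integrableOn_isCompact hsupp).integrable_of_forall_notMem_eq_zero
      fun x hx => image_eq_zero_of_notMem_tsupport hx
  exact integrable_setIntegral_Ioi_norm_div volume ((integrable_fun_norm_addHaar volume).1 hρb)

/-- If the kernel `ρ` satisfies (H0) and has compact support, then `Q_ρ ∈ L¹(ℝⁿ)`. -/
theorem Qrho_integrable
    (n : ℕ) (ρ : Euc n → ℝ) (ρb : ℝ → ℝ) (ε : ℝ) (hε : 0 < ε)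
    (hρ : H0 n ρ ρb ε) (hsupp : HasCompactSupport ρ) :
    Integrable (Qrho n ρb) volume :=
  Qrho_integrable_general n ρ ρb ε hρ hsupp
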